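/- Let K ⊆ V be a nonempty cone, let F be a face of co K, and let J ∈ F̂(K). Then J ∩ F ∈ F̂(K); that is, co(K ∩ J ∩ F) = J ∩ F. -/

import Mathlib

open RealInnerProductSpace

variable {V : Type*} [NormedAddCommGroup V] [InnerProductSpace ℝ V]

/-- A (not necessarily convex or closed) cone: closed under nonnegative scaling. -/
def IsCone (C : Set V) : Prop := ∀ X ∈ C, ∀ l : ℝ, 0 ≤ l → l • X ∈ C

/-- `F̂(K)`: the family of all convex cones `J ⊆ co K` with `co (K ∩ J) = J`. -/
def Fhat (K : Set V) : Set (Set V) :=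
  {J | Convex ℝ J ∧ IsCone J ∧ J ⊆ convexHull ℝ K ∧ convexHull ℝ (K ∩ J) = J}

/-- `F` is a face of the convex cone `C`: `F` is a convex cone contained in `C`, and
whenever a finite sum of elements of `C` lies in `F`, each summand lies in `F`. -/
def IsFace (C F : Set V) : Prop :=
  F ⊆ C ∧ Convex ℝ F ∧ IsCone F ∧
    ∀ (m : ℕ) (X : Fin m → V), (∀ k, X k ∈ C) → (∑ k, X k) ∈ F → ∀ k, X k ∈ F

/-!
Write `x ∈ J ∩ F` as a convex combination `∑ wᵢ zᵢ` of points `zᵢ ∈ K ∩ J`. Since `K` is a cone,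
every summand `wᵢ zᵢ` lies in `co K`, so the face property puts each of them in `F`; dividing by
the weight, every `zᵢ` with `wᵢ > 0` lies in `F`, and `x` is a convex combination of points of
`K ∩ J ∩ F`.
-/

open Set Pointwise

theorem IsCone.inter {C D : Set V} (hC : IsCone C) (hD : IsCone D) : IsCone (C ∩ D) :=
  fun X hX l hl => ⟨hC X hX.1 l hl, hD X hX.2 l hl⟩

theorem IsCone.convexHull {K : Set V} (hK : IsCone K) : IsCone (convexHull ℝ K) := by
  intro X hX l hl
  have hlK : l • K ⊆ K := smul_set_subset_iff.2 fun Y hY => hK Y hY l hl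
  refine convexHull_mono hlK ?_
  rw [convexHull_smul]
  exact smul_mem_smul_set hX

theorem IsCone.mem_of_smul_mem {C : Set V} (hC : IsCone C) {w : ℝ} {X : V} (hw : 0 < w)
    (h : w • X ∈ C) : X ∈ C := by
  simpa [smul_smul, inv_mul_cancel₀ hw.ne'] using hC _ h w⁻¹ (inv_nonneg.2 hw.le)

theorem IsFace.convex {C F : Set V} (hF : IsFace C F) : Convex ℝ F := hF.2.1

theorem IsFace.isCone {C F : Set V} (hF : IsFace C F) : IsCone F := hF.2.2.1

theorem IsFace.mem_of_sum_mem {C F : Set V} (hF : IsFace C F) {ι : Type*} [Fintype ι]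
    {X : ι → V} (hX : ∀ i, X i ∈ C) (hsum : ∑ i, X i ∈ F) (i : ι) : X i ∈ F := by
  let e := Fintype.equivFin ι
  have hsum' : ∑ k, (X ∘ e.symm) k ∈ F := by
    simpa only [Function.comp_apply, Equiv.sum_comp] using hsum
  simpa [e] using hF.2.2.2 _ (X ∘ e.symm) (fun k => hX _) hsum' (e i)

theorem IsFace.convexHull_inter_subset {C F S : Set V} (hC : IsCone C) (hF : IsFace C F)
    (hS : S ⊆ C) : convexHull ℝ S ∩ F ⊆ convexHull ℝ (S ∩ F) := by
  rintro _ ⟨hx, hxF⟩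
  obtain ⟨ι, _, w, z, hw₀, hw₁, hz, rfl⟩ := mem_convexHull_iff_exists_fintype.1 hx
  have hsummand : ∀ i, w i • z i ∈ F :=
    hF.mem_of_sum_mem (fun i => hC _ (hS (hz i)) _ (hw₀ i)) hxF
  -- `Convex.finsum_mem` only asks for membership of the points with nonzero weight.
  rw [← finsum_eq_sum_of_fintype]
  refine (convex_convexHull ℝ _).finsum_mem hw₀ (by rwa [finsum_eq_sum_of_fintype])
    fun i hi => subset_convexHull ℝ _ ⟨hz i, ?_⟩
  exact hF.isCone.mem_of_smul_mem ((hw₀ i).lt_of_ne' hi) (hsummand i)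

theorem stmt_9_general (K J F : Set V)
    (hKcone : IsCone K)
    (hF : IsFace (convexHull ℝ K) F) (hJ : J ∈ Fhat K) :
    J ∩ F ∈ Fhat K ∧ convexHull ℝ (K ∩ J ∩ F) = J ∩ F := by
  obtain ⟨hJconv, hJcone, hJsub, hJeq⟩ := hJ
  have hco : convexHull ℝ (K ∩ (J ∩ F)) = J ∩ F := by
    refine (convexHull_min inter_subset_right (hJconv.inter hF.convex)).antisymm ?_
    calc J ∩ F = convexHull ℝ (K ∩ J) ∩ F := by rw [hJeq]
      _ ⊆ convexHull ℝ (K ∩ J ∩ F) := hF.convexHull_inter_subset hKcone.convexHull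
          (inter_subset_left.trans (subset_convexHull ℝ K))
      _ = convexHull ℝ (K ∩ (J ∩ F)) := by rw [inter_assoc]
  exact ⟨⟨hJconv.inter hF.convex, hJcone.inter hF.isCone, inter_subset_left.trans hJsub, hco⟩,
    by rwa [inter_assoc]⟩

/-- Theorem 3.1 (ii): for every face `F` of `co K` and every `J ∈ F̂(K)`,
`J ∩ F ∈ F̂(K)`; in particular `co (K ∩ J ∩ F) = J ∩ F`. -/
theorem stmt_9 [FiniteDimensional ℝ V] (K J F : Set V)
    (hKne : K.Nonempty) (hKcone : IsCone K)
    (hF : IsFace (convexHull ℝ K) F) (hJ : J ∈ Fhat K) :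
    J ∩ F ∈ Fhat K ∧ convexHull ℝ (K ∩ J ∩ F) = J ∩ F :=
  stmt_9_general K J F hKcone hF hJ
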